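/- Let d ≥ 1, let D be a distribution on {0,1}^d, let f, h_0, h_1 : {0,1}^d → {0,1}, let ε > 0, and let δ ≥ 0. Suppose Pr_{x∼D}[h_1(x) ≠ f(x)] > (1+ε)·Pr_{x∼D}[h_0(x) ≠ f(x)], let S = {x : h_0(x) ≠ h_1(x)} (so D(S) > 0), and let Ĥ be a distribution on {0,1}^d with d_TV(Ĥ, D|_S) ≤ δ. Then Pr_{x∼Ĥ}[h_0(x) ≠ f(x)] < 1/2 − ε/(2(2+ε)) + δ. -/

import Mathlib

/-- `D` is a probability distribution on a finite type: pointwise nonnegative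
and summing to one. -/
def IsDist {X : Type*} [Fintype X] (D : X → ℝ) : Prop :=
  (∀ x, 0 ≤ D x) ∧ ∑ x, D x = 1

open scoped Classical in
/-- `pr D P = Pr_{x ∼ D}[P x] = ∑_{x : P x} D x`. -/
noncomputable def pr {X : Type*} [Fintype X] (D : X → ℝ) (P : X → Prop) : ℝ :=
  ∑ x, if P x then D x else 0

/-- Total variation distance between two distributions on a finite type. -/
noncomputable def dTV {X : Type*} [Fintype X] (P Q : X → ℝ) : ℝ :=
  (1 / 2) * ∑ x, |P x - Q x|

open scoped Classical

lemma pr_nonneg {X : Type*} [Fintype X] (D : X → ℝ) (hD : ∀ x, 0 ≤ D x)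
    (P : X → Prop) : 0 ≤ pr D P := by
  unfold pr
  apply Finset.sum_nonneg
  intro x _
  by_cases h : P x <;> simp [h, hD x]

lemma tv_bound {X : Type*} [Fintype X] (P Q : X → ℝ)
    (hP : ∑ x, P x = 1) (hQ : ∑ x, Q x = 1) (A : X → Prop) :
    pr P A - pr Q A ≤ dTV P Q := by
  have hdiff : pr P A - pr Q A = ∑ x, (if A x then P x - Q x else 0) := by
    unfold pr
    rw [← Finset.sum_sub_distrib]
    apply Finset.sum_congr rfl
    intro x _
    by_cases h : A x <;> simp [h]
  have hzero : ∑ x, (P x - Q x) = 0 := by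
    rw [Finset.sum_sub_distrib, hP, hQ]; ring
  have hkey : ∑ x, (if A x then P x - Q x else -(P x - Q x)) ≤ ∑ x, |P x - Q x| := by
    apply Finset.sum_le_sum
    intro x _
    split_ifs
    · exact le_abs_self _
    · exact neg_le_abs _
  have heq : ∑ x, (if A x then P x - Q x else -(P x - Q x))
      = 2 * (∑ x, (if A x then P x - Q x else 0)) - ∑ x, (P x - Q x) := by
    rw [Finset.mul_sum, ← Finset.sum_sub_distrib]
    apply Finset.sum_congr rfl
    intro x _
    by_cases h : A x <;> simp [h] <;> ring
  rw [heq, hzero] at hkey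
  unfold dTV
  rw [hdiff]
  linarith

/-- if `Pr_D[h1 ≠ f] > (1+ε)·Pr_D[h0 ≠ f]`,
`S = {x | h0 x ≠ h1 x}` (so `D(S) > 0`), and `Ĥ` is a distribution with
`d_TV(Ĥ, D|_S) ≤ δ`, then `Pr_{Ĥ}[h0 ≠ f] < 1/2 − ε/(2(2+ε)) + δ`. -/
theorem stmt13 (d : ℕ) (hd : 1 ≤ d)
    (D : (Fin d → Bool) → ℝ) (hD : IsDist D)
    (f h0 h1 : (Fin d → Bool) → Bool) (ε δ : ℝ) (hε : 0 < ε) (hδ : 0 ≤ δ)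
    (hyp : pr D (fun x => h1 x ≠ f x) > (1 + ε) * pr D (fun x => h0 x ≠ f x))
    (Hhat : (Fin d → Bool) → ℝ) (hHhat : IsDist Hhat)
    (htv : dTV Hhat
        (fun x => (if h0 x ≠ h1 x then D x else 0) / pr D (fun x => h0 x ≠ h1 x))
      ≤ δ) :
    pr Hhat (fun x => h0 x ≠ f x) < 1 / 2 - ε / (2 * (2 + ε)) + δ := by
  obtain ⟨hDnn, hDsum⟩ := hD
  set a := pr D (fun x => h0 x ≠ f x ∧ h0 x ≠ h1 x) with ha
  set b := pr D (fun x => h1 x ≠ f x ∧ h0 x ≠ h1 x) with hb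
  set c := pr D (fun x => h0 x ≠ f x ∧ h0 x = h1 x) with hc
  set s := pr D (fun x => h0 x ≠ h1 x) with hs
  have han : 0 ≤ a := pr_nonneg D hDnn _
  have hbn : 0 ≤ b := pr_nonneg D hDnn _
  have hcn : 0 ≤ c := pr_nonneg D hDnn _
  have h0split : pr D (fun x => h0 x ≠ f x) = a + c := by
    rw [ha, hc]; unfold pr
    rw [← Finset.sum_add_distrib]
    apply Finset.sum_congr rfl
    intro x _
    by_cases hp : h0 x = f x <;> by_cases hq : h0 x = h1 x <;> simp [hp, hq]
  have h1split : pr D (fun x => h1 x ≠ f x) = b + c := by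
    rw [hb, hc]; unfold pr
    rw [← Finset.sum_add_distrib]
    apply Finset.sum_congr rfl
    intro x _
    cases hfx : f x <;> cases h0x : h0 x <;> cases h1x : h1 x <;>
      simp [hfx, h0x, h1x]
  have hssplit : s = a + b := by
    rw [hs, ha, hb]; unfold pr
    rw [← Finset.sum_add_distrib]
    apply Finset.sum_congr rfl
    intro x _
    cases hfx : f x <;> cases h0x : h0 x <;> cases h1x : h1 x <;>
      simp [hfx, h0x, h1x]
  rw [h0split, h1split] at hyp
  have hbgt : b > (1 + ε) * a + ε * c := by nlinarith
  have hbpos : 0 < b := by nlinarith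
  have hspos : 0 < s := by rw [hssplit]; linarith
  set Q : (Fin d → Bool) → ℝ :=
    fun x => (if h0 x ≠ h1 x then D x else 0) / pr D (fun x => h0 x ≠ h1 x) with hQ
  have hsum : (∑ x, if h0 x ≠ h1 x then D x else 0) = s := by
    rw [hs]; unfold pr
    apply Finset.sum_congr rfl
    intro x _
    by_cases hq : h0 x = h1 x <;> simp [hq]
  have hQsum : ∑ x, Q x = 1 := by
    rw [hQ]
    simp only [← hs]
    rw [← Finset.sum_div, hsum]
    field_simp
  have hsum' : (∑ x, if h0 x = h1 x then 0 else D x) = s := by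
    rw [← hsum]
    apply Finset.sum_congr rfl
    intro x _
    by_cases hq : h0 x = h1 x <;> simp [hq]
  have hQpr : pr Q (fun x => h0 x ≠ f x) = a / s := by
    rw [hQ, ha]
    unfold pr
    rw [Finset.sum_div]
    apply Finset.sum_congr rfl
    intro x _
    by_cases hp : h0 x = f x <;> by_cases hq : h0 x = h1 x <;>
      simp [hp, hq, ← hs]
    congr 1
    rw [← hsum]
    apply Finset.sum_congr rfl
    intro y _
    by_cases h : h0 y = h1 y <;> simp [h]
  have htvb : pr Hhat (fun x => h0 x ≠ f x) - pr Q (fun x => h0 x ≠ f x)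
      ≤ dTV Hhat Q := tv_bound Hhat Q hHhat.2 hQsum _
  have hfrac : a / s < 1 / (2 + ε) := by
    rw [div_lt_div_iff₀ hspos (by linarith)]
    nlinarith [hssplit]
  have heps : 1 / (2 + ε) = 1 / 2 - ε / (2 * (2 + ε)) := by
    field_simp
    ring
  have htv' : dTV Hhat Q ≤ δ := htv
  rw [hQpr] at htvb
  linarith
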